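/- arXiv:2012.14054 — 7 statements merged into one kernel-verified Lean document; each statement's English description precedes it below -/
import Mathlib

section
/- Define q : ℤ_{>0} → ℚ_{>0} by q(1) = 1, q(n) = q(n/2) + 1 if n ≥ 2 is even, and q(n) = 1/q(n−1) if n ≥ 3 is odd. Then q is a bijection from the positive integers onto the positive rationals. -/
/-!
Away from `n = 1` the recursion reads `q (2n) = q n + 1` and `q (2n+1) = 1 / (q n + 1)`, so
`q 1 = 1`, `q` is `> 1` on even and `< 1` on odd arguments, and the last step of the
recursion can be read off the value. This gives injectivity by strong induction. Conversely
`a / b` is `(a - b) / b + 1` if `a > b` and `1 / ((b - a) / a + 1)` if `a < b`, so every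
positive fraction is hit, by induction on `a + b`.
-/

lemma eq_one_or_exists_pos_two_mul_or_two_mul_add_one {n : ℕ} (hn : 0 < n) :
    n = 1 ∨ ∃ k, 0 < k ∧ (n = 2 * k ∨ n = 2 * k + 1) := by
  rcases Nat.even_or_odd' n with ⟨k, h | h⟩
  · exact Or.inr ⟨k, by omega, Or.inl h⟩
  · rcases k.eq_zero_or_pos with rfl | hk
    · exact Or.inl h
    · exact Or.inr ⟨k, hk, Or.inr h⟩

section

variable {q : ℕ → ℚ}

lemma q_two_mul (heven : ∀ n : ℕ, 2 ≤ n → n % 2 = 0 → q n = q (n / 2) + 1)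
    {n : ℕ} (hn : 0 < n) : q (2 * n) = q n + 1 := by
  rw [heven (2 * n) (by omega) (by omega), Nat.mul_div_cancel_left n two_pos]

lemma q_two_mul_add_one (heven : ∀ n : ℕ, 2 ≤ n → n % 2 = 0 → q n = q (n / 2) + 1)
    (hodd : ∀ n : ℕ, 3 ≤ n → n % 2 = 1 → q n = 1 / q (n - 1))
    {n : ℕ} (hn : 0 < n) : q (2 * n + 1) = (q n + 1)⁻¹ := by
  rw [hodd (2 * n + 1) (by omega) (by omega), Nat.add_sub_cancel, q_two_mul heven hn, one_div]

variable (h1 : q 1 = 1) (heven : ∀ n : ℕ, 2 ≤ n → n % 2 = 0 → q n = q (n / 2) + 1)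
    (hodd : ∀ n : ℕ, 3 ≤ n → n % 2 = 1 → q n = 1 / q (n - 1))

include h1 heven hodd

lemma q_pos : ∀ n, 0 < n → 0 < q n := by
  intro n hn
  induction n using Nat.strong_induction_on with
  | _ n ih =>
    rcases eq_one_or_exists_pos_two_mul_or_two_mul_add_one hn with rfl | ⟨k, hk, rfl | rfl⟩
    · rw [h1]; exact one_pos
    · rw [q_two_mul heven hk]; linarith [ih k (by omega) hk]
    · rw [q_two_mul_add_one heven hodd hk]; have := ih k (by omega) hk; positivity

lemma one_lt_q_two_mul {n : ℕ} (hn : 0 < n) : 1 < q (2 * n) := by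
  rw [q_two_mul heven hn]; linarith [q_pos h1 heven hodd n hn]

lemma q_two_mul_add_one_lt_one {n : ℕ} (hn : 0 < n) : q (2 * n + 1) < 1 := by
  rw [q_two_mul_add_one heven hodd hn]
  exact inv_lt_one_of_one_lt₀ (by linarith [q_pos h1 heven hodd n hn])

lemma q_injOn : Set.InjOn q {n | 0 < n} := by
  intro m hm n hn h
  induction m using Nat.strong_induction_on generalizing n with
  | _ m ih =>
    have one_lt {k : ℕ} (hk : 0 < k) := one_lt_q_two_mul h1 heven hodd hk
    have lt_one {k : ℕ} (hk : 0 < k) := q_two_mul_add_one_lt_one h1 heven hodd hk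
    rcases eq_one_or_exists_pos_two_mul_or_two_mul_add_one hm with rfl | ⟨k, hk, rfl | rfl⟩ <;>
      rcases eq_one_or_exists_pos_two_mul_or_two_mul_add_one hn with rfl | ⟨j, hj, rfl | rfl⟩
    · rfl
    · linarith [one_lt hj]
    · linarith [lt_one hj]
    · linarith [one_lt hk]
    · rw [q_two_mul heven hk, q_two_mul heven hj, add_left_inj] at h
      rw [ih k (by omega) hk hj h]
    · linarith [one_lt hk, lt_one hj]
    · linarith [lt_one hk]
    · linarith [lt_one hk, one_lt hj]
    · rw [q_two_mul_add_one heven hodd hk, q_two_mul_add_one heven hodd hj, inv_inj,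
        add_left_inj] at h
      rw [ih k (by omega) hk hj h]

lemma exists_q_eq_div : ∀ a b : ℕ, 0 < a → 0 < b → ∃ n, 0 < n ∧ q n = a / b := by
  intro a b ha hb
  induction hs : a + b using Nat.strong_induction_on generalizing a b with
  | _ s ih =>
    rcases lt_trichotomy a b with hab | rfl | hab
    · obtain ⟨c, rfl⟩ := Nat.exists_eq_add_of_lt hab
      obtain ⟨m, hm, hqm⟩ := ih (c + 1 + a) (by omega) (c + 1) a (by omega) ha (by omega)
      refine ⟨2 * m + 1, by omega, ?_⟩
      rw [q_two_mul_add_one heven hodd hm, hqm]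
      field_simp
      push_cast
      ring
    · exact ⟨1, one_pos, by rw [h1, div_self (by positivity)]⟩
    · obtain ⟨c, rfl⟩ := Nat.exists_eq_add_of_lt hab
      obtain ⟨m, hm, hqm⟩ := ih (c + 1 + b) (by omega) (c + 1) b (by omega) hb (by omega)
      refine ⟨2 * m, by omega, ?_⟩
      rw [q_two_mul heven hm, hqm]
      field_simp
      push_cast
      ring

lemma q_surjOn : Set.SurjOn q {n | 0 < n} {x | 0 < x} := by
  intro x hx
  have hnum : 0 < x.num := Rat.num_pos.mpr hx
  obtain ⟨n, hn, hqn⟩ := exists_q_eq_div h1 heven hodd x.num.natAbs x.den (by omega) x.pos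
  refine ⟨n, hn, ?_⟩
  rw [hqn, Nat.cast_natAbs, Int.cast_abs, abs_of_pos (by exact_mod_cast hnum), Rat.num_div_den]

end

/-- Define `q : ℤ_{>0} → ℚ_{>0}` by `q 1 = 1`, `q n = q (n/2) + 1` if `n ≥ 2` is even,
and `q n = 1 / q (n-1)` if `n ≥ 3` is odd. Then `q` is a bijection from the positive
integers onto the positive rationals. -/
theorem q_bijection (q : ℕ → ℚ) (h1 : q 1 = 1)
    (heven : ∀ n : ℕ, 2 ≤ n → n % 2 = 0 → q n = q (n / 2) + 1)
    (hodd : ∀ n : ℕ, 3 ≤ n → n % 2 = 1 → q n = 1 / q (n - 1)) :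
    Set.BijOn q {n : ℕ | 0 < n} {x : ℚ | 0 < x} :=
  ⟨q_pos h1 heven hodd, q_injOn h1 heven hodd, q_surjOn h1 heven hodd⟩
end

section
/- Define τ : ℕ → ℚ by τ(0) = 0, τ(1) = 1, τ(2) = −1, and for n ≥ 3: τ(n) = τ((n−1)/2) + 1 if n ≡ 3 (mod 4), τ(n) = τ(n/2) − 1 if n ≡ 0 (mod 4), and τ(n) = 1/τ(n−2) if n ≡ 1 or 2 (mod 4). Then τ is a bijection from ℕ onto ℚ. -/
/-!
With `a m = τ (2m+1)` the recursion reads `a 0 = 1`, `a (2k+1) = a k + 1`,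
`a (2k+2) = 1 / (a k + 1)`, and `τ (2m+2) = -a m`. So `a` lists, in heap order, the binary tree
rooted at `1` in which `q` has the children `q + 1 > 1` and `1 / (q + 1) < 1`. A positive rational
`q ≠ 1` has exactly one possible parent, `q - 1` or `1 / q - 1`, whose height `|num| + den` is
smaller; hence every positive rational occurs in the tree exactly once.
-/

open Function

namespace Nat

@[elab_as_elim]
theorem heap_induction {P : ℕ → Prop} (zero : P 0) (odd : ∀ k, P k → P (2 * k + 1))
    (even : ∀ k, P k → P (2 * k + 2)) (n : ℕ) : P n := by
  induction n using Nat.strong_induction_on with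
  | _ n ih =>
    obtain ⟨k, rfl | rfl⟩ := Nat.even_or_odd' n
    · cases k with
      | zero => exact zero
      | succ k => exact even k (ih k (by omega))
    · exact odd k (ih k (by omega))

@[elab_as_elim]
theorem heap_cases {P : ℕ → Prop} (zero : P 0) (odd : ∀ k, P (2 * k + 1))
    (even : ∀ k, P (2 * k + 2)) (n : ℕ) : P n :=
  heap_induction zero (fun k _ => odd k) (fun k _ => even k) n

end Nat

namespace Rat

def height (q : ℚ) : ℕ := q.num.natAbs + q.den

theorem num_sub_one (q : ℚ) : (q - 1).num = q.num - q.den := by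
  have h : ((q - 1).num : ℚ) = q.num - q.den := by
    rw [← mul_den_eq_num, ← mul_den_eq_num q, show (q - 1).den = q.den by simp]; ring
  exact_mod_cast h

theorem height_sub_one_lt {q : ℚ} (hq : 1 < q) : (q - 1).height < q.height := by
  have hden : 0 < q.den := q.den_pos
  have hlt : (q.den : ℤ) < q.num := by
    have h : (q.den : ℚ) < q.num := by
      simpa using mul_lt_mul_of_pos_right hq (by positivity : (0 : ℚ) < q.den)
    exact_mod_cast h
  rw [height, height, num_sub_one, show (q - 1).den = q.den by simp]
  omega

theorem height_inv (q : ℚ) : q⁻¹.height = q.height := by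
  rcases eq_or_ne q 0 with rfl | hq
  · simp
  · simp [height, num_inv, den_inv, Int.natAbs_mul, hq, add_comm, Int.natAbs_sign_of_ne_zero]

end Rat

structure IsRatTreeEnum (a : ℕ → ℚ) : Prop where
  zero : a 0 = 1
  odd : ∀ k, a (2 * k + 1) = a k + 1
  even : ∀ k, a (2 * k + 2) = (a k + 1)⁻¹

namespace IsRatTreeEnum

variable {a : ℕ → ℚ}

theorem pos (ha : IsRatTreeEnum a) (m : ℕ) : 0 < a m := by
  induction m using Nat.heap_induction with
  | zero => rw [ha.zero]; exact one_pos
  | odd k ih => rw [ha.odd]; positivity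
  | even k ih => rw [ha.even]; positivity

theorem one_lt_odd (ha : IsRatTreeEnum a) (k : ℕ) : 1 < a (2 * k + 1) := by
  rw [ha.odd]; linarith [ha.pos k]

theorem even_lt_one (ha : IsRatTreeEnum a) (k : ℕ) : a (2 * k + 2) < 1 := by
  rw [ha.even]; exact inv_lt_one_of_one_lt₀ (by linarith [ha.pos k])

theorem injective (ha : IsRatTreeEnum a) : Injective a := by
  intro m m' h
  induction m using Nat.heap_induction generalizing m' with
  | zero =>
    cases m' using Nat.heap_cases with
    | zero => rfl
    | odd j => linarith [ha.zero, ha.one_lt_odd j]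
    | even j => linarith [ha.zero, ha.even_lt_one j]
  | odd k ih =>
    cases m' using Nat.heap_cases with
    | zero => linarith [ha.zero, ha.one_lt_odd k]
    | odd j => rw [ha.odd, ha.odd, add_left_inj] at h; rw [ih h]
    | even j => linarith [ha.one_lt_odd k, ha.even_lt_one j]
  | even k ih =>
    cases m' using Nat.heap_cases with
    | zero => linarith [ha.zero, ha.even_lt_one k]
    | odd j => linarith [ha.even_lt_one k, ha.one_lt_odd j]
    | even j => rw [ha.even, ha.even, inv_inj, add_left_inj] at h; rw [ih h]

theorem exists_eq (ha : IsRatTreeEnum a) {q : ℚ} (hq : 0 < q) : ∃ m, a m = q := by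
  induction hn : q.height using Nat.strong_induction_on generalizing q with
  | _ n ih =>
    subst hn
    rcases lt_trichotomy q 1 with hlt | rfl | hgt
    · have hq' : 1 < q⁻¹ := (one_lt_inv₀ hq).2 hlt
      obtain ⟨k, hk⟩ := ih _ (q.height_inv ▸ Rat.height_sub_one_lt hq') (sub_pos.2 hq') rfl
      exact ⟨2 * k + 2, by rw [ha.even, hk, sub_add_cancel, inv_inv]⟩
    · exact ⟨0, ha.zero⟩
    · obtain ⟨k, hk⟩ := ih _ (Rat.height_sub_one_lt hgt) (sub_pos.2 hgt) rfl
      exact ⟨2 * k + 1, by rw [ha.odd, hk, sub_add_cancel]⟩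

end IsRatTreeEnum

theorem bijective_of_heap_split {τ a : ℕ → ℚ} (ha : IsRatTreeEnum a) (h0 : τ 0 = 0)
    (hodd : ∀ m, τ (2 * m + 1) = a m) (heven : ∀ m, τ (2 * m + 2) = -a m) : Bijective τ := by
  refine ⟨fun n n' h => ?_, fun q => ?_⟩
  · cases n using Nat.heap_cases with
    | zero =>
      cases n' using Nat.heap_cases with
      | zero => rfl
      | odd j => rw [h0, hodd] at h; linarith [ha.pos j]
      | even j => rw [h0, heven] at h; linarith [ha.pos j]
    | odd k =>
      cases n' using Nat.heap_cases with
      | zero => rw [h0, hodd] at h; linarith [ha.pos k]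
      | odd j => rw [hodd, hodd] at h; rw [ha.injective h]
      | even j => rw [hodd, heven] at h; linarith [ha.pos k, ha.pos j]
    | even k =>
      cases n' using Nat.heap_cases with
      | zero => rw [h0, heven] at h; linarith [ha.pos k]
      | odd j => rw [heven, hodd] at h; linarith [ha.pos k, ha.pos j]
      | even j => rw [heven, heven, neg_inj] at h; rw [ha.injective h]
  · rcases lt_trichotomy q 0 with hq | rfl | hq
    · obtain ⟨m, hm⟩ := ha.exists_eq (neg_pos.2 hq)
      exact ⟨2 * m + 2, by rw [heven, hm, neg_neg]⟩
    · exact ⟨0, h0⟩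
    · obtain ⟨m, hm⟩ := ha.exists_eq hq
      exact ⟨2 * m + 1, by rw [hodd, hm]⟩

/-- Define `τ : ℕ → ℚ` by `τ 0 = 0`, `τ 1 = 1`, `τ 2 = -1`, and for `n ≥ 3`:
`τ n = τ ((n-1)/2) + 1` if `n ≡ 3 mod 4`, `τ n = τ (n/2) - 1` if `n ≡ 0 mod 4`, and
`τ n = 1 / τ (n-2)` if `n ≡ 1, 2 mod 4`. Then `τ` is a bijection from `ℕ` onto `ℚ`. -/
theorem tau_bijection (τ : ℕ → ℚ) (h0 : τ 0 = 0) (h1 : τ 1 = 1) (h2 : τ 2 = -1)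
    (h3 : ∀ n : ℕ, 3 ≤ n → n % 4 = 3 → τ n = τ ((n - 1) / 2) + 1)
    (h4 : ∀ n : ℕ, 3 ≤ n → n % 4 = 0 → τ n = τ (n / 2) - 1)
    (h12 : ∀ n : ℕ, 3 ≤ n → (n % 4 = 1 ∨ n % 4 = 2) → τ n = 1 / τ (n - 2)) :
    Function.Bijective τ := by
  have h4k3 (k : ℕ) : τ (2 * (2 * k + 1) + 1) = τ (2 * k + 1) + 1 := by
    rw [h3 _ (by omega) (by omega), show (2 * (2 * k + 1) + 1 - 1) / 2 = 2 * k + 1 by omega]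
  have h4k4 (k : ℕ) : τ (2 * (2 * k + 1) + 2) = τ (2 * k + 2) - 1 := by
    rw [h4 _ (by omega) (by omega), show (2 * (2 * k + 1) + 2) / 2 = 2 * k + 2 by omega]
  have h4k5 (k : ℕ) : τ (2 * (2 * k + 2) + 1) = (τ (2 * (2 * k + 1) + 1))⁻¹ := by
    rw [h12 _ (by omega) (by omega), one_div,
      show 2 * (2 * k + 2) + 1 - 2 = 2 * (2 * k + 1) + 1 by omega]
  have h4k6 (k : ℕ) : τ (2 * (2 * k + 2) + 2) = (τ (2 * (2 * k + 1) + 2))⁻¹ := by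
    rw [h12 _ (by omega) (by omega), one_div,
      show 2 * (2 * k + 2) + 2 - 2 = 2 * (2 * k + 1) + 2 by omega]
  have hneg (m : ℕ) : τ (2 * m + 2) = -τ (2 * m + 1) := by
    induction m using Nat.heap_induction with
    | zero => rw [h1, h2]
    | odd k ih => rw [h4k4, ih, h4k3]; ring
    | even k ih => rw [h4k6, h4k5, h4k4, ih, h4k3, ← inv_neg]; ring
  have htree : IsRatTreeEnum (fun m => τ (2 * m + 1)) :=
    ⟨h1, h4k3, fun k => by rw [h4k5, h4k3]⟩
  exact bijective_of_heap_split htree h0 (fun _ => rfl) hneg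
end

section
/- Let ρ, γ : ℕ → M be two surjections onto a set M such that both E_γ = {(m,n) : γ(m) = γ(n)} and Δ(γ,ρ) = {(m,n) ∈ ℕ² : γ(m) = ρ(n)} are recursively enumerable. If there is a total computable ψ : ℕ → ℕ with γ ∘ ψ = ρ, then Δ(γ,ρ) is recursively enumerable; conversely, if Δ(γ,ρ) is recursively enumerable then there is a total computable φ : ℕ → ℕ with ρ ∘ φ = γ. -/
/-!
If `γ ∘ ψ = ρ`, then `Δ(γ,ρ)` is the preimage of `E_γ` under the computable map
`(m, n) ↦ (m, ψ n)`. Conversely, surjectivity of `ρ` makes `Δ(γ,ρ)` total in its first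
coordinate, and any total r.e. relation has a computable choice function: dovetail the
search over pairs (number of steps, candidate witness).
-/

open Nat.Partrec.Code

section

variable {α β : Type*} [Primcodable α] [Primcodable β]

theorem REPred.comp {p : β → Prop} (hp : REPred p) {f : α → β} (hf : Computable f) :
    REPred fun a => p (f a) :=
  Partrec.comp hp hf

/-- `f a k` says that the semi-decision procedure for `p a` halts within `k` steps. -/
theorem REPred.exists_computable₂_iff_exists {p : α → Prop} (hp : REPred p) :
    ∃ f : α → ℕ → Bool, Computable₂ f ∧ ∀ a, p a ↔ ∃ k, f a k = true := by
  obtain ⟨c, hc⟩ := Nat.Partrec.Code.exists_code.1 hp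
  have hdom : ∀ a, (eval c (Encodable.encode a)).Dom ↔ p a := fun a => by
    simp [hc, Encodable.encodek, Part.assert]
  refine ⟨fun a k => (evaln k c (Encodable.encode a)).isSome, ?_, fun a => ?_⟩
  · have hevaln : Primrec fun q : α × ℕ => evaln q.2 c (Encodable.encode q.1) :=
      primrec_evaln.comp
        ((Primrec.snd.pair (Primrec.const c)).pair (Primrec.encode.comp Primrec.fst))
    exact (Primrec.option_isSome.comp hevaln).to_comp.to₂
  · rw [← hdom, Part.dom_iff_mem]
    simp only [evaln_complete, Option.isSome_iff_exists, Option.mem_def]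
    exact ⟨fun ⟨x, k, hk⟩ => ⟨k, x, hk⟩, fun ⟨k, x, hk⟩ => ⟨x, k, hk⟩⟩

theorem REPred.exists_computable_choice {p : α × β → Prop} (hp : REPred p)
    (htot : ∀ a, ∃ b, p (a, b)) : ∃ φ : α → β, Computable φ ∧ ∀ a, p (a, φ a) := by
  obtain ⟨f, hf, hpf⟩ := hp.exists_computable₂_iff_exists
  set g : α → ℕ → Option β := fun a k =>
    (Encodable.decode k.unpair.2 : Option β).bind fun b =>
      bif f (a, b) k.unpair.1 then some b else none with hg
  have hgc : Computable₂ g := by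
    have hdecode : Computable fun q : α × ℕ => (Encodable.decode q.2.unpair.2 : Option β) :=
      Computable.decode.comp (Computable.snd.comp (Computable.unpair.comp Computable.snd))
    have htest : Computable₂ fun (q : α × ℕ) (b : β) => f (q.1, b) q.2.unpair.1 :=
      hf.comp ((Computable.fst.comp Computable.fst).pair Computable.snd)
        (Computable.fst.comp (Computable.unpair.comp (Computable.snd.comp Computable.fst)))
    exact hdecode.option_bind
      (Computable.cond htest (Computable.option_some.comp Computable.snd)
        (Computable.const none)).to₂
  have hg_spec : ∀ {a b k}, g a k = some b → p (a, b) := fun {a b k} h => by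
    simp only [hg, Option.bind_eq_some_iff, Bool.cond_eq_ite, Option.ite_none_right_eq_some,
      Option.some.injEq] at h
    obtain ⟨b', -, hfb, rfl⟩ := h
    exact (hpf _).2 ⟨_, hfb⟩
  have hdom : ∀ a, (Nat.rfindOpt (g a)).Dom := fun a => by
    obtain ⟨b, hb⟩ := htot a
    obtain ⟨k, hk⟩ := (hpf _).1 hb
    refine Nat.rfindOpt_dom.2 ⟨Nat.pair k (Encodable.encode b), b, ?_⟩
    simp [hg, Encodable.encodek, hk]
  refine ⟨fun a => (Nat.rfindOpt (g a)).get (hdom a),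
    (Partrec.rfindOpt hgc).of_eq_tot fun a => Part.get_mem (hdom a), fun a => ?_⟩
  obtain ⟨k, hk⟩ := Nat.rfindOpt_spec (Part.get_mem (hdom a))
  exact hg_spec hk

end

theorem diagonal_test_for_equivalence_general {M : Type*} (ρ γ : ℕ → M)
    (hρ : Function.Surjective ρ)
    (hE : REPred (fun p : ℕ × ℕ => γ p.1 = γ p.2)) :
    ((∃ ψ : ℕ → ℕ, Computable ψ ∧ γ ∘ ψ = ρ) →
      REPred (fun p : ℕ × ℕ => γ p.1 = ρ p.2)) ∧
    (REPred (fun p : ℕ × ℕ => γ p.1 = ρ p.2) →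
      ∃ φ : ℕ → ℕ, Computable φ ∧ ρ ∘ φ = γ) := by
  refine ⟨fun ⟨ψ, hψ, hγψ⟩ => ?_, fun hΔ => ?_⟩
  · subst hγψ
    exact hE.comp (Computable.fst.pair (hψ.comp Computable.snd))
  · obtain ⟨φ, hφ, hγφ⟩ :=
      hΔ.exists_computable_choice fun m => (hρ (γ m)).imp fun _ => Eq.symm
    exact ⟨φ, hφ, funext fun m => (hγφ m).symm⟩

/-- Diagonal test for equivalence of presentations. Let `ρ, γ : ℕ → M` be surjections
with `E_γ = {(m,n) : γ m = γ n}` recursively enumerable, and let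
`Δ(γ,ρ) = {(m,n) : γ m = ρ n}`. If there is a total computable `ψ` with `γ ∘ ψ = ρ`,
then `Δ(γ,ρ)` is recursively enumerable; conversely, if `Δ(γ,ρ)` is recursively
enumerable then there is a total computable `φ` with `ρ ∘ φ = γ`. -/
theorem diagonal_test_for_equivalence {M : Type*} (ρ γ : ℕ → M)
    (hρ : Function.Surjective ρ) (hγ : Function.Surjective γ)
    (hE : REPred (fun p : ℕ × ℕ => γ p.1 = γ p.2)) :
    ((∃ ψ : ℕ → ℕ, Computable ψ ∧ γ ∘ ψ = ρ) →
      REPred (fun p : ℕ × ℕ => γ p.1 = ρ p.2)) ∧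
    (REPred (fun p : ℕ × ℕ => γ p.1 = ρ p.2) →
      ∃ φ : ℕ → ℕ, Computable φ ∧ ρ ∘ φ = γ) :=
  diagonal_test_for_equivalence_general ρ γ hρ hE
end

section
/- Let ρ, γ : ℕ → M be surjections onto a set M, with ρ bijective, and suppose there is a total computable function ψ : ℕ → ℕ such that γ(ψ(0)) = ρ(0) and the set T = {(a,b) ∈ ℕ² : ∃ k, γ(a) = ρ(k) ∧ γ(b) = ρ(k+1)} is the image of a total computable function. Then there exists a total computable function χ : ℕ → ℕ with γ ∘ χ = ρ. -/
/-- Let `ρ, γ : ℕ → M` be surjections with `ρ` bijective. Suppose there is a total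
computable `ψ : ℕ → ℕ` with `γ (ψ 0) = ρ 0`, and a total computable
`g : ℕ → ℕ × ℕ` whose image is the set
`T = {(a,b) : ∃ k, γ a = ρ k ∧ γ b = ρ (k+1)}` of `γ`-codes of `ρ`-consecutive pairs.
Then there exists a total computable `χ : ℕ → ℕ` with `γ ∘ χ = ρ`. -/
theorem exists_computable_transfer_of_successor_enum {M : Type*} (ρ γ : ℕ → M)
    (hρ : Function.Bijective ρ) (hγ : Function.Surjective γ)
    (ψ : ℕ → ℕ) (hψ : Computable ψ) (hψ0 : γ (ψ 0) = ρ 0)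
    (g : ℕ → ℕ × ℕ) (hg : Computable g)
    (hgT : Set.range g = {q : ℕ × ℕ | ∃ k : ℕ, γ q.1 = ρ k ∧ γ q.2 = ρ (k + 1)}) :
    ∃ χ : ℕ → ℕ, Computable χ ∧ γ ∘ χ = ρ := by
  classical
  -- the partial "successor" step: search for an index `n` with `(g n).1 = x`
  set step : ℕ →. ℕ :=
    fun x => (Nat.rfind fun n => Part.some (decide ((g n).1 = x))).map fun n => (g n).2 with hstep
  -- the partial recursive transfer function
  set F : ℕ →. ℕ :=
    fun a => Nat.rec (Part.some (ψ 0)) (fun _ IH => IH.bind fun i => step i) a with hF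
  have hstepP : Partrec step := by
    apply Partrec.map
    · exact Partrec.rfind
        (Computable₂.partrec₂
          (Primrec.eq.decide.to_comp.comp
            (Computable.fst.comp (hg.comp Computable.snd)) Computable.fst))
    · exact (Computable.snd.comp (hg.comp Computable.snd)).to₂
  have hFP : Partrec F := by
    have := Partrec.nat_rec (f := fun a : ℕ => a)
      (g := fun _ : ℕ => Part.some (ψ 0)) (h := fun _ p => step p.2)
      Computable.id (Computable.const (ψ 0)).partrec
      ((hstepP.comp (Computable.snd.comp Computable.snd)).to₂)
    exact this
  have key : ∀ k, ∃ x, x ∈ F k ∧ γ x = ρ k := by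
    intro k
    induction k with
    | zero => exact ⟨ψ 0, Part.mem_some _, hψ0⟩
    | succ k ih =>
      obtain ⟨x, hx, hγx⟩ := ih
      obtain ⟨b, hb⟩ := hγ (ρ (k + 1))
      have hT : (x, b) ∈ Set.range g := by rw [hgT]; exact ⟨k, hγx, hb⟩
      obtain ⟨n, hn⟩ := hT
      have hdom : (Nat.rfind fun m => Part.some (decide ((g m).1 = x))).Dom := by
        refine Nat.rfind_dom.2 ⟨n, ?_, fun _ => trivial⟩
        simp [hn]
      set n₀ := (Nat.rfind fun m => Part.some (decide ((g m).1 = x))).get hdom with hn₀def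
      have hn₀ : n₀ ∈ Nat.rfind fun m => Part.some (decide ((g m).1 = x)) :=
        Part.get_mem hdom
      have h1 : (g n₀).1 = x := by simpa using Nat.rfind_spec hn₀
      refine ⟨(g n₀).2, ?_, ?_⟩
      · show (g n₀).2 ∈ (F k).bind fun i => step i
        refine Part.mem_bind_iff.2 ⟨x, hx, ?_⟩
        rw [hstep]
        exact Part.mem_map _ hn₀
      · have hmem : g n₀ ∈ Set.range g := ⟨n₀, rfl⟩
        rw [hgT] at hmem
        obtain ⟨k', h1', h2'⟩ := hmem
        rw [h1, hγx] at h1'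
        rw [h2', ← hρ.1 h1']
  refine ⟨fun k => Classical.choose (key k), ?_, ?_⟩
  · exact hFP.of_eq fun n => (Part.eq_some_iff.2 (Classical.choose_spec (key n)).1)
  · funext k
    exact (Classical.choose_spec (key k)).2
end

section
/- Let p be a prime and for j ≥ 1 set a_j = p^{j^j}. Let A ⊆ ℕ be the set of all sums of distinct elements of {a_j : j ≥ 1} (including the empty sum 0). Then for every j ≥ 1, the number of elements of A that are at most p^{j^j} equals 1 + 2^{j−1}; in particular N(A, p^{j^j}) ≤ 2^j. -/
/-!
Because the exponents `j ^ j` are distinct, the elements of `A` are base-`p` numerals with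
digits `0` and `1`, so distinct sets of indices give distinct elements. A sum over indices
all below `j` is a number with at most `j ^ j` base-`p` digits, hence `< p ^ j ^ j`, while any
sum involving an index `≥ j`, other than `p ^ j ^ j` itself, exceeds `p ^ j ^ j`. The elements
of `A` up to `p ^ j ^ j` therefore correspond to the subsets of `{1, …, j - 1}` together
with `{j}`.
-/

open Finset

namespace SparsePowerSums

def subsetSums (b : ℕ) (e : ℕ → ℕ) (s : Set ℕ) : Set ℕ :=
  {n | ∃ S : Finset ℕ, ↑S ⊆ s ∧ n = ∑ i ∈ S, b ^ e i}

variable {b j : ℕ} {e : ℕ → ℕ} {s : Set ℕ} {S : Finset ℕ}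

theorem sum_pow_injOn (hb : 2 ≤ b) (he : Set.InjOn e s) :
    Set.InjOn (fun S : Finset ℕ ↦ ∑ i ∈ S, b ^ e i) {S | ↑S ⊆ s} := by
  intro S hS T hT h
  have sum_eq (U : Finset ℕ) (hU : ↑U ⊆ s) :
      ∑ i ∈ U, b ^ e i = ∑ k ∈ U.image e, b ^ k :=
    (sum_image fun _ hx _ hy ↦ he (hU hx) (hU hy)).symm
  have himage : S.image e = T.image e :=
    geomSum_injective hb <| by simpa only [sum_eq S hS, sum_eq T hT] using h
  exact_mod_cast (he.image_eq_image_iff hS hT).1 (by exact_mod_cast himage)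

theorem sum_pow_lt_pow (hb : 2 ≤ b) (he : StrictMonoOn e s) (hS : ↑S ⊆ s) (hj : j ∈ s)
    (hlt : ∀ i ∈ S, i < j) : ∑ i ∈ S, b ^ e i < b ^ e j := by
  rw [← sum_image fun _ hx _ hy ↦ he.injOn (hS hx) (hS hy)]
  exact Nat.geomSum_lt hb <| forall_mem_image.2 fun i hi ↦ he (hS hi) hj (hlt i hi)

theorem pow_lt_sum_pow (hb : 2 ≤ b) (he : StrictMonoOn e s) (hS : ↑S ⊆ s) (hj : j ∈ s)
    (hge : ∃ i ∈ S, j ≤ i) (hne : S ≠ {j}) : b ^ e j < ∑ i ∈ S, b ^ e i := by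
  obtain ⟨i, hi, hji⟩ := hge
  rcases hji.lt_or_eq with hji | rfl
  · calc b ^ e j < b ^ e i := Nat.pow_lt_pow_right hb (he hj (hS hi) hji)
      _ ≤ ∑ i ∈ S, b ^ e i :=
        single_le_sum (f := fun i ↦ b ^ e i) (fun _ _ ↦ Nat.zero_le _) hi
  · obtain ⟨k, hk, hki⟩ : ∃ k ∈ S, k ≠ j := by
      by_contra! hall
      exact hne (eq_singleton_iff_unique_mem.2 ⟨hi, hall⟩)
    calc b ^ e j < b ^ e j + b ^ e k := Nat.lt_add_of_pos_right (by positivity)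
      _ = ∑ l ∈ {j, k}, b ^ e l := (sum_pair (f := fun i ↦ b ^ e i) hki.symm).symm
      _ ≤ ∑ l ∈ S, b ^ e l :=
        sum_le_sum_of_subset (insert_subset hi (singleton_subset_iff.2 hk))

theorem sum_pow_le_pow_iff (hb : 2 ≤ b) (he : StrictMonoOn e s) (hS : ↑S ⊆ s) (hj : j ∈ s) :
    ∑ i ∈ S, b ^ e i ≤ b ^ e j ↔ (∀ i ∈ S, i < j) ∨ S = {j} := by
  constructor
  · intro h
    by_contra! ⟨hge, hne⟩
    exact h.not_gt (pow_lt_sum_pow hb he hS hj hge hne)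
  · rintro (hlt | rfl)
    · exact (sum_pow_lt_pow hb he hS hj hlt).le
    · simp

theorem sep_subsetSums_le_pow_eq_image (hb : 2 ≤ b) (he : StrictMonoOn e s) (hj : j ∈ s)
    (T : Finset ℕ) (hT : ∀ i, i ∈ T ↔ i ∈ s ∧ i < j) :
    {n ∈ subsetSums b e s | n ≤ b ^ e j} =
      (fun S : Finset ℕ ↦ ∑ i ∈ S, b ^ e i) '' ↑(insert {j} T.powerset) := by
  ext n
  simp only [subsetSums, Set.mem_ofPred_eq, Set.mem_image, coe_insert, Set.mem_insert_iff,
    mem_coe, mem_powerset]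
  constructor
  · rintro ⟨⟨S, hS, rfl⟩, hle⟩
    refine ⟨S, ?_, rfl⟩
    rcases (sum_pow_le_pow_iff hb he hS hj).1 hle with hlt | rfl
    · exact Or.inr fun i hi ↦ (hT i).2 ⟨hS hi, hlt i hi⟩
    · exact Or.inl rfl
  · rintro ⟨S, hS | hS, rfl⟩
    · subst hS
      exact ⟨⟨{j}, by simpa using hj, rfl⟩, by simp⟩
    · have hSs : ↑S ⊆ s := fun i hi ↦ ((hT i).1 (hS hi)).1
      exact ⟨⟨S, hSs, rfl⟩,
        (sum_pow_lt_pow hb he hSs hj fun i hi ↦ ((hT i).1 (hS hi)).2).le⟩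

theorem ncard_sep_subsetSums_le_pow (hb : 2 ≤ b) (he : StrictMonoOn e s) (hj : j ∈ s)
    (T : Finset ℕ) (hT : ∀ i, i ∈ T ↔ i ∈ s ∧ i < j) :
    {n ∈ subsetSums b e s | n ≤ b ^ e j}.ncard = 2 ^ #T + 1 := by
  have hsub : ↑(insert {j} T.powerset) ⊆ {S : Finset ℕ | ↑S ⊆ s} := by
    intro S hS
    rcases mem_insert.1 hS with rfl | hS
    · simpa using hj
    · exact fun i hi ↦ ((hT i).1 (mem_powerset.1 hS hi)).1
  have hjT : {j} ∉ T.powerset := by simp [hT]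
  rw [sep_subsetSums_le_pow_eq_image hb he hj T hT,
    ((sum_pow_injOn hb he.injOn).mono hsub).ncard_image, Set.ncard_coe_finset,
    card_insert_of_notMem hjT, card_powerset]

theorem strictMonoOn_self_pow : StrictMonoOn (fun i : ℕ ↦ i ^ i) (Set.Ici 1) :=
  fun _ ha _ _ hab ↦ (Nat.pow_lt_pow_left hab (Nat.one_le_iff_ne_zero.1 ha)).trans_le
    (Nat.pow_le_pow_right (ha.trans hab.le) hab.le)

end SparsePowerSums

/-- Let `p` be prime and `a_j = p^{j^j}` for `j ≥ 1`. Let `A ⊆ ℕ` be the set of all sums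
of distinct elements of `{a_j : j ≥ 1}` (including the empty sum `0`). Then for every
`j ≥ 1`, the number of elements of `A` that are at most `p^{j^j}` equals `1 + 2^{j-1}`;
in particular `N(A, p^{j^j}) ≤ 2^j`. -/
theorem counting_sparse_powers (p : ℕ) (hp : p.Prime)
    (A : Set ℕ)
    (hA : A = {n : ℕ | ∃ S : Finset ℕ, (∀ i ∈ S, 1 ≤ i) ∧ n = ∑ i ∈ S, p ^ i ^ i}) :
    ∀ j : ℕ, 1 ≤ j →
      ({n ∈ A | n ≤ p ^ j ^ j} : Set ℕ).ncard = 1 + 2 ^ (j - 1) ∧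
      ({n ∈ A | n ≤ p ^ j ^ j} : Set ℕ).ncard ≤ 2 ^ j := by
  intro j hj
  have hcount : ({n ∈ A | n ≤ p ^ j ^ j} : Set ℕ).ncard = 2 ^ (j - 1) + 1 := by
    have hA' : A = SparsePowerSums.subsetSums p (fun i ↦ i ^ i) (Set.Ici 1) := hA
    subst hA'
    simpa using SparsePowerSums.ncard_sep_subsetSums_le_pow hp.two_le
      SparsePowerSums.strictMonoOn_self_pow hj (Ico 1 j) (by simp)
  have hpow : 2 ^ j = 2 * 2 ^ (j - 1) := by rw [← pow_succ']; congr 1; omega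
  have hpos := Nat.one_le_two_pow (n := j - 1)
  exact ⟨by omega, by omega⟩
end

section
/- Let m ≥ 2 and let A ⊆ ℕ be an infinite set recognizable by a finite deterministic automaton reading base-m digits (least significant first). Then there exist constants x₀ ≥ 1 and c > 0 such that for all x ≥ x₀, the counting function satisfies N(A, x) > c · log x. -/
/-!
Since `A` is infinite, some element has a digit string `a ++ b ++ c` longer than the number of
states, and the pumping lemma makes every `a ++ bʲ ++ (b ++ c)` accepted. These words end in the
nonzero leading digit of the original one, so they are the base-`m` expansions of distinct
elements of `A`, the `j`-th having `L + p j` digits with `p = |b| > 0`. Hence `A` has at least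
about `log_m x / p` elements up to `x`.
-/

open Function Computability

theorem Language.append_flatten_replicate_append_mem {α : Type*} (a b c : List α) (j : ℕ) :
    a ++ (List.replicate j b).flatten ++ (b ++ c) ∈ ({a} * {b}∗ * {c} : Language α) := by
  have hpow : (List.replicate j b).flatten ++ b = (List.replicate (j + 1) b).flatten := by
    rw [List.replicate_succ', List.flatten_append, List.flatten_singleton]
  refine Language.mem_mul.mpr ⟨a ++ (List.replicate (j + 1) b).flatten, ?_, c, rfl, ?_⟩
  · exact Language.mem_mul.mpr ⟨a, rfl, _, Language.join_mem_kstar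
      fun y hy => List.eq_of_mem_replicate hy, rfl⟩
  · rw [← hpow]; simp only [List.append_assoc]

/-- The leading digit lies in the kept suffix `s`, so it stays nonzero. -/
theorem Nat.digits_ofDigits_append_of_digits_eq_append {b n : ℕ} (hb : 1 < b)
    {t u s : List ℕ} (hs : s ≠ []) (hn : b.digits n = t ++ s) (hu : ∀ d ∈ u, d < b) :
    b.digits (Nat.ofDigits b (u ++ s)) = u ++ s := by
  have hn0 : n ≠ 0 := by rintro rfl; simp_all
  refine Nat.digits_ofDigits b hb _ ?_ fun h => ?_
  · intro d hd
    rcases List.mem_append.mp hd with hd | hd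
    · exact hu d hd
    · exact Nat.digits_lt_base hb (hn ▸ List.mem_append_right t hd)
  · rw [List.getLast_append_of_ne_nil h hs,
      ← List.getLast_append_of_ne_nil (hn ▸ Nat.digits_ne_nil_iff_ne_zero.mpr hn0) hs]
    simpa only [hn] using Nat.getLast_digit_ne_zero b hn0

theorem Real.log_lt_natLog_add_one_mul {b : ℕ} (hb : 1 < b) (x : ℕ) :
    Real.log x < (Nat.log b x + 1) * Real.log b := by
  have hlogb : 0 < Real.log b := Real.log_pos (by exact_mod_cast hb)
  rw [← natFloor_logb_natCast, ← div_lt_iff₀ hlogb, Real.log_div_log]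
  exact Nat.lt_floor_add_one _

theorem Nat.le_of_lt_pow_log {b n x : ℕ} (h : n < b ^ Nat.log b x) : n ≤ x := by
  rcases eq_or_ne x 0 with rfl | hx
  · simp_all
  · exact (h.trans_le (Nat.pow_log_le_self b hx)).le

section Counting

variable {A : Set ℕ} {g : ℕ → ℕ} {b L p : ℕ}

/-- The terms `g 0, …, g ((log_b x - L) / p)` have at most `log_b x` digits, so none
exceeds `x`. -/
theorem natLog_sub_div_add_one_le_ncard (hb : 0 < b) (hg : Injective g) (hgA : ∀ j, g j ∈ A)
    (hlt : ∀ j, g j < b ^ (L + p * j)) {x : ℕ} (hL : L ≤ Nat.log b x) :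
    (Nat.log b x - L) / p + 1 ≤ ({n ∈ A | n ≤ x} : Set ℕ).ncard := by
  have hfin : ({n ∈ A | n ≤ x} : Set ℕ).Finite := (Set.finite_Iic x).subset fun _ hn => hn.2
  have hmem : ∀ j ∈ Set.Iio ((Nat.log b x - L) / p + 1), g j ∈ {n ∈ A | n ≤ x} := by
    intro j hj
    have hpj : p * j ≤ Nat.log b x - L :=
      (Nat.mul_le_mul_left p (Nat.lt_succ_iff.mp hj)).trans (Nat.mul_div_le _ _)
    exact ⟨hgA j, Nat.le_of_lt_pow_log <| (hlt j).trans_le (Nat.pow_le_pow_right hb (by omega))⟩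
  simpa using Set.ncard_le_ncard_of_injOn g hmem hg.injOn hfin

theorem exists_mul_log_lt_ncard (hb : 1 < b) (hp : 0 < p) (hg : Injective g)
    (hgA : ∀ j, g j ∈ A) (hlt : ∀ j, g j < b ^ (L + p * j)) :
    ∃ x₀ : ℕ, 1 ≤ x₀ ∧ ∃ c : ℝ, 0 < c ∧ ∀ x : ℕ, x₀ ≤ x →
      c * Real.log x < ({n ∈ A | n ≤ x} : Set ℕ).ncard := by
  have hlogb : 0 < Real.log b := Real.log_pos (by exact_mod_cast hb)
  refine ⟨b ^ (2 * L), Nat.one_le_pow _ _ (by omega), 1 / (2 * p * Real.log b),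
    by positivity, fun x hx => ?_⟩
  set K := Nat.log b x
  have hK : 2 * L ≤ K := (Nat.log_pow hb _).symm.trans_le (Nat.log_mono_right hx)
  have hcount := natLog_sub_div_add_one_le_ncard (by omega) hg hgA hlt (x := x) (by omega)
  have hdiv : K + 1 ≤ 2 * p * ((K - L) / p + 1) := by
    have hrem := Nat.lt_div_mul_add (a := K - L) hp
    set q := (K - L) / p
    rw [show 2 * p * (q + 1) = 2 * (q * p) + 2 * p by ring]
    omega
  have hdiv' : ((K : ℝ) + 1) ≤ 2 * p * (((K - L) / p + 1 : ℕ) : ℝ) := by exact_mod_cast hdiv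
  calc 1 / (2 * p * Real.log b) * Real.log x
      < 1 / (2 * p * Real.log b) * ((K + 1) * Real.log b) := by
        gcongr; exact Real.log_lt_natLog_add_one_mul hb x
    _ = (K + 1) / (2 * p) := by field_simp
    _ ≤ (((K - L) / p + 1 : ℕ) : ℝ) := by
        rw [div_le_iff₀ (by positivity)]; linarith
    _ ≤ _ := by exact_mod_cast hcount

end Counting

/-- Let `m ≥ 2` and let `A ⊆ ℕ` be an infinite set recognizable by a finite
deterministic automaton reading base-`m` digits (least significant first). Then there
are constants `x₀ ≥ 1` and `c > 0` such that for all `x ≥ x₀` the counting function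
satisfies `N(A, x) > c · log x`. -/
theorem automatic_set_counting_lower_bound (m : ℕ) (hm : 2 ≤ m) (A : Set ℕ)
    (hA : A.Infinite)
    (hrec : ∃ (σ : Type) (_ : Fintype σ) (M : DFA (Fin m) σ),
      ∀ n : ℕ, n ∈ A ↔ ∃ l : List (Fin m),
        l.map Fin.val = Nat.digits m n ∧ l ∈ M.accepts) :
    ∃ x₀ : ℕ, 1 ≤ x₀ ∧ ∃ c : ℝ, 0 < c ∧ ∀ x : ℕ, x₀ ≤ x →
      c * Real.log x < ({n ∈ A | n ≤ x} : Set ℕ).ncard := by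
  obtain ⟨σ, _, M, hM⟩ := hrec
  obtain ⟨n, hnA, hn⟩ := hA.exists_gt (m ^ Fintype.card σ)
  obtain ⟨w, hw, hwM⟩ := (hM n).mp hnA
  have hlen : Fintype.card σ ≤ w.length := by
    rw [← List.length_map (f := Fin.val), hw]
    exact ((Nat.lt_digits_length_iff hm n).mpr hn.le).le
  obtain ⟨a, b, c, rfl, -, hb, hpump⟩ := M.pumping_lemma hwM hlen
  let pump (j : ℕ) : List (Fin m) := a ++ (List.replicate j b).flatten ++ (b ++ c)
  have hdigits (j : ℕ) :
      Nat.digits m (Nat.ofDigits m ((pump j).map Fin.val)) = (pump j).map Fin.val := by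
    rw [List.map_append]
    refine Nat.digits_ofDigits_append_of_digits_eq_append hm (t := a.map Fin.val) (by simp [hb])
      (hw.symm.trans ?_) ?_
    · simp only [List.map_append, List.append_assoc]
    · intro d hd
      obtain ⟨i, -, rfl⟩ := List.mem_map.mp hd
      exact i.isLt
  have hlength (j : ℕ) : (pump j).length = (a ++ b ++ c).length + b.length * j := by
    simp only [pump, List.append_assoc, List.length_append, List.length_flatten,
      List.map_replicate, List.sum_replicate, smul_eq_mul]
    ring
  have hinj : Injective fun j => Nat.ofDigits m ((pump j).map Fin.val) := fun i j hij => by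
    have hlen_eq := congrArg (fun k => (Nat.digits m k).length) hij
    simp only [hdigits, List.length_map, hlength] at hlen_eq
    exact Nat.eq_of_mul_eq_mul_left (List.length_pos_iff.mpr hb) (by omega)
  refine exists_mul_log_lt_ncard (L := (a ++ b ++ c).length) hm (List.length_pos_iff.mpr hb) hinj
    (fun j => (hM _).mpr ⟨pump j, (hdigits j).symm,
      hpump (Language.append_flatten_replicate_append_mem a b c j)⟩)
    (fun j => ?_)
  simpa only [hdigits, List.length_map, hlength] using
    Nat.lt_base_pow_length_digits (m := Nat.ofDigits m ((pump j).map Fin.val)) hm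
end

section
/- Let k be a field and consider the field k(t) of rational functions. The subset k ⊆ k(t) of constant functions is existentially definable in k(t) when k is algebraically closed of characteristic 0 in the following weak sense: every x ∈ k satisfies ∃ y, y² = x³ + 1 in k(t), while by the Riemann–Hurwitz formula any x ∈ ℂ(t) satisfying ∃ y ∈ ℂ(t), y² = x³ + 1 must be constant. Formally: for x ∈ ℂ(t), there exists y ∈ ℂ(t) with y² = x³ + 1 if and only if x ∈ ℂ. -/
/-! Write `x = p / q` and `y = r / s` in lowest terms. Clearing denominators in `y² = x³ + c`
forces `s² = q³`, hence `q = u²` and `r² = p³ + c u⁶` in `K[X]`. Since `1/3 + 1/6 + 1/2 = 1`,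
the Mason–Stothers theorem (as `Polynomial.flt_catalan`) makes `p` and `u` constant once the
characteristic is neither 2 nor 3. Conversely, over `ℂ` a constant `x` has a constant square
root of `x³ + 1`. -/

open Polynomial

theorem exists_eq_pow_three_and_eq_sq_of_sq_eq_pow_three {R : Type*} [CommRing R] [IsDomain R]
    [IsIntegrallyClosed R] {a b : R} (h : a ^ 2 = b ^ 3) : ∃ u, a = u ^ 3 ∧ b = u ^ 2 := by
  obtain rfl | hb := eq_or_ne b 0
  · exact ⟨0, by simpa using h, by simp⟩
  have hba : b ∣ a := (IsIntegrallyClosed.pow_dvd_pow_iff two_ne_zero).mp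
    (h ▸ pow_dvd_pow b (by norm_num))
  obtain ⟨u, rfl⟩ := hba
  have hbu : b = u ^ 2 := mul_left_cancel₀ (pow_ne_zero 2 hb) (by linear_combination h.symm)
  exact ⟨u, by rw [hbu]; ring, hbu⟩

theorem Polynomial.natDegree_eq_zero_of_sq_eq_pow_three_add_C_mul_pow_six {K : Type*} [Field K]
    (h2 : (2 : K) ≠ 0) (h3 : (3 : K) ≠ 0) {a b c : K[X]} (hab : IsCoprime a b) {κ : K}
    (hκ : κ ≠ 0) (h : c ^ 2 = a ^ 3 + C κ * b ^ 6) : a.natDegree = 0 ∧ b.natDegree = 0 := by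
  obtain rfl | ha := eq_or_ne a 0
  · exact ⟨natDegree_zero, natDegree_eq_zero_of_isUnit (isCoprime_zero_left.mp hab)⟩
  obtain rfl | hb := eq_or_ne b 0
  · exact ⟨natDegree_eq_zero_of_isUnit (isCoprime_zero_right.mp hab), natDegree_zero⟩
  obtain rfl | hc := eq_or_ne c 0
  · have hb6 : IsUnit (b ^ 6) := (hab.pow (m := 3) (n := 6)).isUnit_of_dvd'
      ⟨-C κ, by linear_combination -h⟩ dvd_rfl
    have ha3 : IsUnit (a ^ 3) := by
      rw [show a ^ 3 = -C κ * b ^ 6 by linear_combination -h]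
      exact ((isUnit_C.mpr hκ.isUnit).neg).mul hb6
    exact ⟨natDegree_eq_zero_of_isUnit ((isUnit_pow_iff three_ne_zero).mp ha3),
      natDegree_eq_zero_of_isUnit ((isUnit_pow_iff (by norm_num)).mp hb6)⟩
  have h6 : ((6 : ℕ) : K) ≠ 0 := by
    rw [show ((6 : ℕ) : K) = 2 * 3 by norm_num]; exact mul_ne_zero h2 h3
  obtain ⟨ha0, hb0, -⟩ := flt_catalan (p := 3) (q := 6) (r := 2) (by norm_num) (by norm_num)
    (by norm_num) (by norm_num) (by exact_mod_cast h3) h6 (by exact_mod_cast h2) ha hb hc hab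
    one_ne_zero hκ (neg_ne_zero.mpr one_ne_zero) (by rw [h]; simp)
  exact ⟨ha0, hb0⟩

namespace RatFunc

variable {K : Type*} [Field K]

theorem num_sq_mul_denom_pow_three_of_sq_eq_pow_three_add_C {x y : RatFunc K} {c : K}
    (h : y ^ 2 = x ^ 3 + C c) :
    y.num ^ 2 * x.denom ^ 3 = (x.num ^ 3 + Polynomial.C c * x.denom ^ 3) * y.denom ^ 2 := by
  apply algebraMap_injective K
  have hx := algebraMap_ne_zero (K := K) x.denom_ne_zero
  have hy := algebraMap_ne_zero (K := K) y.denom_ne_zero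
  rw [← num_div_denom x, ← num_div_denom y, ← algebraMap_C] at h
  field_simp at h
  simp only [map_mul, map_pow, map_add]
  linear_combination h

theorem denom_sq_eq_denom_pow_three_of_sq_eq_pow_three_add_C {x y : RatFunc K} {c : K}
    (h : y ^ 2 = x ^ 3 + C c) : y.denom ^ 2 = x.denom ^ 3 := by
  have key := num_sq_mul_denom_pow_three_of_sq_eq_pow_three_add_C h
  have hyx : y.denom ^ 2 ∣ x.denom ^ 3 :=
    (isCoprime_num_denom y).symm.pow.dvd_of_dvd_mul_left ⟨_, key.trans (mul_comm _ _)⟩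
  have hxy : x.denom ^ 3 ∣ y.denom ^ 2 :=
    ((isCoprime_num_denom x).symm.pow.add_mul_right_right (Polynomial.C c)).dvd_of_dvd_mul_left
      ⟨_, key.symm.trans (mul_comm _ _)⟩
  exact eq_of_monic_of_associated ((monic_denom y).pow 2) ((monic_denom x).pow 3)
    (associated_of_dvd_dvd hyx hxy)

theorem mem_range_C_of_sq_eq_pow_three_add_C (h2 : (2 : K) ≠ 0) (h3 : (3 : K) ≠ 0) {c : K}
    (hc : c ≠ 0) {x y : RatFunc K} (h : y ^ 2 = x ^ 3 + C c) : x ∈ Set.range (C : K →+* _) := by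
  have hdenom := denom_sq_eq_denom_pow_three_of_sq_eq_pow_three_add_C h
  obtain ⟨u, -, hxu⟩ := exists_eq_pow_three_and_eq_sq_of_sq_eq_pow_three hdenom
  have hnum : y.num ^ 2 = x.num ^ 3 + Polynomial.C c * u ^ 6 := by
    have key := num_sq_mul_denom_pow_three_of_sq_eq_pow_three_add_C h
    rw [hdenom] at key
    rw [mul_right_cancel₀ (pow_ne_zero 3 x.denom_ne_zero) key, hxu, ← pow_mul]
  have hcop : IsCoprime x.num u :=
    (IsCoprime.pow_right_iff two_pos).mp (hxu ▸ isCoprime_num_denom x)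
  obtain ⟨hnum0, hu0⟩ :=
    natDegree_eq_zero_of_sq_eq_pow_three_add_C_mul_pow_six h2 h3 hcop hc hnum
  have hdenom1 : x.denom = 1 :=
    (monic_denom x).natDegree_eq_zero.mp (by rw [hxu, natDegree_pow, hu0, mul_zero])
  refine ⟨x.num.coeff 0, ?_⟩
  conv_rhs => rw [← num_div_denom x, hdenom1, map_one, div_one, eq_C_of_natDegree_eq_zero hnum0]
  exact (algebraMap_C _).symm

end RatFunc

/-- For `x ∈ ℂ(t)`, there exists `y ∈ ℂ(t)` with `y² = x³ + 1` if and only if `x` is a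
constant (an element of `ℂ`). -/
theorem elliptic_defines_constants (x : RatFunc ℂ) :
    (∃ y : RatFunc ℂ, y ^ 2 = x ^ 3 + 1) ↔
      x ∈ Set.range (RatFunc.C : ℂ →+* RatFunc ℂ) := by
  constructor
  · rintro ⟨y, hy⟩
    exact RatFunc.mem_range_C_of_sq_eq_pow_three_add_C two_ne_zero three_ne_zero one_ne_zero
      (by rw [map_one]; exact hy)
  · rintro ⟨c, rfl⟩
    obtain ⟨z, hz⟩ := IsAlgClosed.exists_pow_nat_eq (c ^ 3 + 1) two_pos
    exact ⟨RatFunc.C z, by rw [← map_pow, hz, map_add, map_pow, map_one]⟩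
end
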